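/- arXiv:1711.10145 — 4 statements merged into one kernel-verified Lean document; each statement's English description precedes it below -/
import Mathlib

section
/- Let X be a discrete random variable with support of size ℓ and Shannon entropy H(X) ≥ log₂ ℓ - a for some a ≥ 0. For γ ∈ (0,1], let S = {x : p(x) ≤ 2^((a+1)/γ)/ℓ}. Then P(X ∈ S) ≥ 1 - γ. -/
/-! The quantity `∑ p log (p ℓ) = log ℓ - H(X)` (entropy in nats) is at most `a log 2`. An atom with
`p > c / ℓ` contributes more than `p log c` to it, and every other atom of the support at least
`-1 / (e ℓ)`, because `t log t ≥ -1 / e`. Hence `log c · P(X ∉ S) ≤ a log 2 + 1 / e`, and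
`1 / e < log 2` makes the right side smaller than `(a + 1) log 2 = γ log c` for `c = 2 ^ ((a + 1) / γ)`. -/

open Real Finset

lemma negMulLog_le_exp_neg_one {x : ℝ} (hx : 0 ≤ x) : negMulLog x ≤ exp (-1) := by
  rcases hx.eq_or_lt with rfl | hx
  · simp [(exp_pos _).le]
  have hlog : -log x ≤ exp (-1) / x := by
    have := add_one_le_exp (-1 - log x)
    rw [exp_sub, exp_log hx] at this
    linarith
  calc negMulLog x = x * -log x := by rw [negMulLog]; ring
    _ ≤ x * (exp (-1) / x) := by gcongr
    _ = exp (-1) := by field_simp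

lemma exp_neg_one_lt_log_two : exp (-1) < log 2 := by
  have : exp (-1) < 1 / 2 := by
    rw [exp_neg, ← one_div]
    exact one_div_lt_one_div_of_lt two_pos exp_one_gt_two
  linarith [log_two_gt_d9]

section

variable {Ω : Type*} [Fintype Ω] {p : Ω → ℝ}

lemma sum_mul_log_mul_eq (hsum : ∑ ω, p ω = 1) {ℓ : ℝ} (hℓ : ℓ ≠ 0) :
    ∑ ω, p ω * log (p ω * ℓ) = log ℓ - ∑ ω, negMulLog (p ω) := by
  have hterm : ∀ ω, p ω * log (p ω * ℓ) = p ω * log ℓ - negMulLog (p ω) := by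
    intro ω
    rcases eq_or_ne (p ω) 0 with h | h
    · simp [h]
    · rw [log_mul h hℓ, negMulLog]
      ring
  simp only [hterm, sum_sub_distrib, ← sum_mul, hsum, one_mul]

lemma sum_mul_logb_one_div_eq (b : ℝ) :
    ∑ ω, p ω * logb b (1 / p ω) = (∑ ω, negMulLog (p ω)) / log b := by
  simp only [sum_div, logb, one_div, log_inv, negMulLog, neg_mul, neg_div, mul_div_assoc, mul_neg]

lemma card_support_pos_of_sum_eq_one (hsum : ∑ ω, p ω = 1) :
    0 < #{ω | p ω ≠ 0} := by
  rw [card_pos, filter_nonempty_iff]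
  by_contra! h
  simp [sum_eq_zero fun ω _ => h ω (mem_univ ω)] at hsum

theorem log_mul_sum_heavy_le (hp : ∀ ω, 0 ≤ p ω) (hsum : ∑ ω, p ω = 1) {c : ℝ} (hc : 0 < c) :
    log c * ∑ ω with c / #{ω | p ω ≠ 0} < p ω, p ω ≤
      log #{ω | p ω ≠ 0} - ∑ ω, negMulLog (p ω) + exp (-1) := by
  set ℓ := #{ω | p ω ≠ 0}
  have hℓ : (0 : ℝ) < ℓ := by exact_mod_cast card_support_pos_of_sum_eq_one hsum
  -- summed over `Ω`, the left side becomes `log c * P(heavy) - exp (-1)`, the support having `ℓ` atoms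
  have hterm : ∀ ω, (if c / ℓ < p ω then p ω * log c else 0) -
      (if p ω ≠ 0 then exp (-1) / ℓ else 0) ≤ p ω * log (p ω * ℓ) := by
    intro ω
    rcases (hp ω).eq_or_lt with h | h
    · simp [← h, (div_pos hc hℓ).not_gt]
    have hlow : -(exp (-1) / ℓ) ≤ p ω * log (p ω * ℓ) := by
      have := negMulLog_le_exp_neg_one (mul_pos h hℓ).le
      rw [negMulLog] at this
      rw [neg_le, le_div_iff₀ hℓ]
      linarith
    rw [if_pos h.ne']
    split_ifs with hheavy
    · have : p ω * log c ≤ p ω * log (p ω * ℓ) :=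
        mul_le_mul_of_nonneg_left (log_le_log hc ((div_lt_iff₀ hℓ).mp hheavy).le) h.le
      linarith [div_nonneg (exp_pos (-1)).le hℓ.le]
    · linarith
  have hsum_le := sum_le_sum fun ω (_ : ω ∈ univ) => hterm ω
  rw [sum_sub_distrib, ← sum_filter, ← sum_filter, sum_const, nsmul_eq_mul, ← sum_mul,
    sum_mul_log_mul_eq hsum hℓ.ne', mul_div_cancel₀ _ hℓ.ne'] at hsum_le
  linarith

end

theorem stmt6_general {Ω : Type*} [Fintype Ω] (p : Ω → ℝ) (a γ : ℝ) (ℓ : ℕ)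
    (hp : ∀ ω, 0 ≤ p ω) (hsum : ∑ ω, p ω = 1)
    (ha : 0 ≤ a) (hγ0 : 0 < γ)
    (hℓ : ℓ = (Finset.univ.filter (fun ω => p ω ≠ 0)).card)
    (hent : Real.logb 2 ℓ - a ≤ ∑ ω, p ω * Real.logb 2 (1 / p ω)) :
    1 - γ ≤ ∑ ω ∈ Finset.univ.filter (fun ω => p ω ≤ (2:ℝ)^((a+1)/γ) / ℓ), p ω := by
  subst hℓ
  set c : ℝ := 2 ^ ((a + 1) / γ)
  have hlog2 : 0 < log 2 := log_pos one_lt_two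
  have hlogc : log c = (a + 1) / γ * log 2 := log_rpow two_pos _
  have hent_nat : log #{ω | p ω ≠ 0} - a * log 2 ≤ ∑ ω, negMulLog (p ω) := by
    rw [sum_mul_logb_one_div_eq, logb, div_sub' hlog2.ne', div_le_div_iff_of_pos_right hlog2] at hent
    linarith
  have hheavy := log_mul_sum_heavy_le hp hsum (rpow_pos_of_pos two_pos ((a + 1) / γ))
  have hsplit := sum_filter_add_sum_filter_not univ (fun ω => p ω ≤ c / #{ω | p ω ≠ 0}) p
  simp only [not_le, hsum] at hsplit
  have hlogc_pos : 0 < log c := by rw [hlogc]; positivity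
  have hlight : ∑ ω with c / #{ω | p ω ≠ 0} < p ω, p ω < γ := by
    refine lt_of_mul_lt_mul_left ?_ hlogc_pos.le
    calc log c * _ ≤ a * log 2 + exp (-1) := by linarith
      _ < (a + 1) * log 2 := by linarith [exp_neg_one_lt_log_two]
      _ = log c * γ := by rw [hlogc]; field_simp
  linarith

/-- If `X` has support of size `ℓ` and entropy `H(X) ≥ log₂ ℓ - a`, then the set
`S = {x : p(x) ≤ 2^((a+1)/γ)/ℓ}` has probability at least `1 - γ`. -/
theorem stmt6 {Ω : Type*} [Fintype Ω] (p : Ω → ℝ) (a γ : ℝ) (ℓ : ℕ)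
    (hp : ∀ ω, 0 ≤ p ω) (hsum : ∑ ω, p ω = 1)
    (ha : 0 ≤ a) (hγ0 : 0 < γ) (hγ1 : γ ≤ 1)
    (hℓ : ℓ = (Finset.univ.filter (fun ω => p ω ≠ 0)).card)
    (hent : Real.logb 2 ℓ - a ≤ ∑ ω, p ω * Real.logb 2 (1 / p ω)) :
    1 - γ ≤ ∑ ω ∈ Finset.univ.filter (fun ω => p ω ≤ (2:ℝ)^((a+1)/γ) / ℓ), p ω :=
  stmt6_general p a γ ℓ hp hsum ha hγ0 hℓ hent
end

section
/- Let Y = (Y₁,...,Y_ℓ) be a random variable with values in {0,1}^ℓ and define bias_i(Y) = P(Y_i = 0) - P(Y_i = 1). If there is a set S ⊆ [ℓ] such that the average over i ∈ S of bias_i(Y) is at least 2γ for some γ > 0, then H(Y) ≤ ℓ - γ²·|S|. -/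
/-!
Gibbs' inequality against the product of the marginals gives subadditivity,
`H(Y) ≤ ∑ᵢ H(Yᵢ)`. A bit of bias `β` has entropy at most `log 2 - β²/2` nats (a Pinsker-type
bound: the gap is monotone on `[1/2, 1]` because `log (1 + b) - log (1 - b) ≥ 2b`).
Finally, by Cauchy–Schwarz an average bias of `2γ` over `S` forces `∑_{i ∈ S} βᵢ² ≥ 4γ²|S|`.
-/

open Real Finset

theorem two_mul_le_log_one_add_sub_log_one_sub {b : ℝ} (hb₀ : 0 ≤ b) (hb₁ : b < 1) :
    2 * b ≤ log (1 + b) - log (1 - b) := by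
  have hs := hasSum_log_sub_log_of_abs_lt_one (abs_lt.2 ⟨by linarith, hb₁⟩)
  simpa using le_hasSum hs 0 fun k _ => by positivity

theorem two_mul_two_mul_sub_one_le_log_sub_log {x : ℝ} (hx₀ : 1 / 2 ≤ x) (hx₁ : x < 1) :
    2 * (2 * x - 1) ≤ log x - log (1 - x) := by
  have h := two_mul_le_log_one_add_sub_log_one_sub (b := 2 * x - 1) (by linarith) (by linarith)
  rwa [show 1 + (2 * x - 1) = 2 * x by ring, show 1 - (2 * x - 1) = 2 * (1 - x) by ring,
    log_mul two_ne_zero (by linarith), log_mul two_ne_zero (by linarith), add_sub_add_left_eq_sub]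
    at h

theorem binEntropy_le_log_two_sub_sq_of_half_le {a : ℝ} (ha₀ : 1 / 2 ≤ a) (ha₁ : a ≤ 1) :
    binEntropy a ≤ log 2 - (2 * a - 1) ^ 2 / 2 := by
  set F : ℝ → ℝ := fun x => log 2 - (2 * x - 1) ^ 2 / 2 - binEntropy x
  have hF : ∀ x ∈ Set.Ioo (1 / 2) a,
      HasDerivAt F (log x - log (1 - x) - 2 * (2 * x - 1)) x := by
    intro x hx
    have hx₀ : x ≠ 0 := by linarith [hx.1]
    have hx₁ : x ≠ 1 := by linarith [hx.2]
    exact (((((hasDerivAt_id x).const_mul 2).sub_const 1).pow 2 |>.div_const 2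
      |>.const_sub _).sub (hasDerivAt_binEntropy hx₀ hx₁)).congr_deriv (by simp only [id]; ring)
  have hmono : MonotoneOn F (Set.Icc (1 / 2) a) := by
    refine monotoneOn_of_deriv_nonneg (convex_Icc _ _) (by fun_prop) ?_ ?_ <;>
      rw [interior_Icc]
    · exact fun x hx => (hF x hx).differentiableAt.differentiableWithinAt
    · intro x hx
      rw [(hF x hx).deriv]
      linarith [two_mul_two_mul_sub_one_le_log_sub_log hx.1.le (hx.2.trans_le ha₁)]
  have h := hmono ⟨le_rfl, ha₀⟩ ⟨ha₀, le_rfl⟩ ha₀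
  have hhalf : binEntropy (1 / 2) = log 2 := by rw [one_div, binEntropy_two_inv]
  norm_num [F, hhalf] at h
  linarith

theorem binEntropy_le_log_two_sub_sq {a : ℝ} (ha₀ : 0 ≤ a) (ha₁ : a ≤ 1) :
    binEntropy a ≤ log 2 - (2 * a - 1) ^ 2 / 2 := by
  rcases le_total (1 / 2) a with h | h
  · exact binEntropy_le_log_two_sub_sq_of_half_le h ha₁
  · have := binEntropy_le_log_two_sub_sq_of_half_le (a := 1 - a) (by linarith) (by linarith)
    rw [binEntropy_one_sub] at this
    linarith

theorem mul_log_sub_mul_log_le {p q : ℝ} (hp : 0 ≤ p) (hq : 0 ≤ q) (hpq : 0 < p → 0 < q) :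
    p * log q - p * log p ≤ q - p := by
  rcases hp.eq_or_lt with rfl | hp
  · simpa using hq
  have hq := hpq hp
  have h := mul_le_mul_of_nonneg_left (log_le_sub_one_of_pos (div_pos hq hp)) hp.le
  rwa [log_div hq.ne' hp.ne', mul_sub, mul_sub, mul_one, mul_div_cancel₀ _ hp.ne'] at h

theorem sum_mul_log_le_sum_mul_log {κ : Type*} (s : Finset κ) {p q : κ → ℝ}
    (hp : ∀ i ∈ s, 0 ≤ p i) (hq : ∀ i ∈ s, 0 ≤ q i) (hpq : ∀ i ∈ s, 0 < p i → 0 < q i)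
    (hsum : ∑ i ∈ s, q i ≤ ∑ i ∈ s, p i) :
    ∑ i ∈ s, p i * log (q i) ≤ ∑ i ∈ s, p i * log (p i) := by
  have h := sum_le_sum fun i hi => mul_log_sub_mul_log_le (hp i hi) (hq i hi) (hpq i hi)
  simp only [sum_sub_distrib] at h
  linarith

section Marginal

variable {ι : Type*} [Fintype ι] [DecidableEq ι] {α : ι → Type*} [∀ i, Fintype (α i)]
  [∀ i, DecidableEq (α i)] {p : (∀ i, α i) → ℝ}

def marginal (p : (∀ i, α i) → ℝ) (i : ι) (a : α i) : ℝ := ∑ y with y i = a, p y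

theorem marginal_nonneg (hp : ∀ y, 0 ≤ p y) (i : ι) (a : α i) : 0 ≤ marginal p i a :=
  sum_nonneg fun y _ => hp y

theorem sum_marginal (i : ι) : ∑ a, marginal p i a = ∑ y, p y :=
  sum_fiberwise _ _ _

theorem le_marginal (hp : ∀ y, 0 ≤ p y) (i : ι) (y : ∀ i, α i) : p y ≤ marginal p i (y i) :=
  single_le_sum (fun z _ => hp z) (by simp)

theorem sum_mul_apply_eq_sum_marginal_mul (i : ι) (f : α i → ℝ) :
    ∑ y, p y * f (y i) = ∑ a, marginal p i a * f a := by
  rw [← sum_fiberwise univ (fun y => y i)]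
  simp only [marginal, sum_mul]
  exact sum_congr rfl fun a _ => sum_congr rfl fun y hy => by rw [(mem_filter.1 hy).2]

theorem sum_prod_marginal (hsum : ∑ y, p y = 1) :
    ∑ y : ∀ i, α i, ∏ i, marginal p i (y i) = 1 := by
  rw [← Fintype.prod_sum]
  exact prod_eq_one fun i _ => (sum_marginal i).trans hsum

theorem sum_mul_log_prod_marginal (hp : ∀ y, 0 ≤ p y) :
    ∑ y, p y * log (∏ i, marginal p i (y i)) =
      ∑ i, ∑ a, marginal p i a * log (marginal p i a) := by
  have h : ∀ y, p y * log (∏ i, marginal p i (y i)) =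
      ∑ i, p y * log (marginal p i (y i)) := by
    intro y
    rcases (hp y).eq_or_lt with hy | hy
    · simp [← hy]
    · rw [log_prod fun i _ => (hy.trans_le (le_marginal hp i y)).ne', mul_sum]
  simp only [h]
  rw [sum_comm]
  exact sum_congr rfl fun i _ =>
    sum_mul_apply_eq_sum_marginal_mul i fun a => log (marginal p i a)

theorem sum_negMulLog_le_sum_negMulLog_marginal (hp : ∀ y, 0 ≤ p y) (hsum : ∑ y, p y = 1) :
    ∑ y, negMulLog (p y) ≤ ∑ i, ∑ a, negMulLog (marginal p i a) := by
  have hgibbs := sum_mul_log_le_sum_mul_log univ (p := p)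
    (q := fun y => ∏ i, marginal p i (y i))
    (fun y _ => hp y) (fun y _ => prod_nonneg fun i _ => marginal_nonneg hp i _)
    (fun y _ hy => prod_pos fun i _ => hy.trans_le (le_marginal hp i y))
    (by rw [sum_prod_marginal hsum, hsum])
  rw [sum_mul_log_prod_marginal hp] at hgibbs
  simp only [negMulLog, neg_mul, sum_neg_distrib]
  exact neg_le_neg hgibbs

end Marginal

theorem sum_negMulLog_le_log_two_sub_sq {r : Bool → ℝ} (hr : ∀ b, 0 ≤ r b)
    (hsum : ∑ b, r b = 1) : ∑ b, negMulLog (r b) ≤ log 2 - (r false - r true) ^ 2 / 2 := by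
  rw [Fintype.sum_bool] at hsum ⊢
  rw [show r true = 1 - r false by linarith, add_comm,
    ← binEntropy_eq_negMulLog_add_negMulLog_one_sub]
  convert binEntropy_le_log_two_sub_sq (hr false) (by linarith [hr true]) using 3
  ring

theorem sq_mul_card_le_sum_sq {κ : Type*} {s : Finset κ} {f : κ → ℝ} {c : ℝ} (hc : 0 ≤ c)
    (h : c ≤ (∑ i ∈ s, f i) / #s) : c ^ 2 * #s ≤ ∑ i ∈ s, f i ^ 2 := by
  obtain rfl | hs := s.eq_empty_or_nonempty
  · simp
  rw [← le_div_iff₀ (by positivity)]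
  exact (pow_le_pow_left₀ hc h 2).trans sum_div_card_sq_le_sum_sq_div_card

theorem stmt7_general {ℓ : ℕ} (p : (Fin ℓ → Bool) → ℝ) (γ : ℝ) (S : Finset (Fin ℓ))
    (hp : ∀ y, 0 ≤ p y) (hsum : ∑ y, p y = 1)
    (hγ : 0 < γ)
    (hbias : 2 * γ ≤ (∑ i ∈ S,
        ((∑ y ∈ Finset.univ.filter (fun y : Fin ℓ → Bool => y i = false), p y)
          - ∑ y ∈ Finset.univ.filter (fun y : Fin ℓ → Bool => y i = true), p y)) / S.card) :
    -∑ y, p y * Real.logb 2 (p y) ≤ (ℓ : ℝ) - γ^2 * S.card := by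
  let bias i := marginal p i false - marginal p i true
  have hS : (2 * γ) ^ 2 * #S ≤ ∑ i ∈ S, bias i ^ 2 :=
    sq_mul_card_le_sum_sq (by positivity) hbias
  have hnats : ∑ y, negMulLog (p y) ≤ ℓ * log 2 - ∑ i ∈ S, bias i ^ 2 / 2 := calc
    _ ≤ ∑ i, ∑ b, negMulLog (marginal p i b) :=
        sum_negMulLog_le_sum_negMulLog_marginal hp hsum
    _ ≤ ∑ i, (log 2 - bias i ^ 2 / 2) := sum_le_sum fun i _ =>
        sum_negMulLog_le_log_two_sub_sq (marginal_nonneg hp i) ((sum_marginal i).trans hsum)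
    _ ≤ ℓ * log 2 - ∑ i ∈ S, bias i ^ 2 / 2 := by
        rw [sum_sub_distrib, sum_const, card_univ, Fintype.card_fin, nsmul_eq_mul]
        gcongr ?_ - ?_
        exact sum_le_sum_of_subset_of_nonneg (subset_univ S) fun i _ _ => by positivity
  have hbits : -∑ y, p y * logb 2 (p y) = (∑ y, negMulLog (p y)) / log 2 := by
    simp only [negMulLog, logb, sum_div, ← sum_neg_distrib]
    exact sum_congr rfl fun y _ => by ring
  have hlog₂ : 0 < log 2 := log_pos one_lt_two
  rw [hbits, div_le_iff₀ hlog₂]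
  rw [← sum_div] at hnats
  have hlog₂_le : γ ^ 2 * #S * log 2 ≤ γ ^ 2 * #S * 2 :=
    mul_le_mul_of_nonneg_left (by linarith [log_two_lt_d9]) (by positivity)
  linarith

/-- If the average over `i ∈ S` of `bias_i(Y) = P(Y_i=0) - P(Y_i=1)` is at least `2γ`,
then `H(Y) ≤ ℓ - γ²|S|`. -/
theorem stmt7 {ℓ : ℕ} (p : (Fin ℓ → Bool) → ℝ) (γ : ℝ) (S : Finset (Fin ℓ))
    (hp : ∀ y, 0 ≤ p y) (hsum : ∑ y, p y = 1)
    (hγ : 0 < γ) (hS : S.Nonempty)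
    (hbias : 2 * γ ≤ (∑ i ∈ S,
        ((∑ y ∈ Finset.univ.filter (fun y : Fin ℓ → Bool => y i = false), p y)
          - ∑ y ∈ Finset.univ.filter (fun y : Fin ℓ → Bool => y i = true), p y)) / S.card) :
    -∑ y, p y * Real.logb 2 (p y) ≤ (ℓ : ℝ) - γ^2 * S.card :=
  stmt7_general p γ S hp hsum hγ hbias
end

section
/- Let X = (X₁,...,Xₙ) and Y = (Y₁,...,Yₙ) be random variables such that the pairs (X₁,Y₁),...,(Xₙ,Yₙ) are mutually independent, and let R be an arbitrary random variable on the same space. Then the sum over i of the conditional mutual informations I(X_i ; R | X_{<i}, Y_{≥i}) is at most I(X ; R | Y). -/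
/-
By the chain rule, `I(X ; R | Y) = ∑ i, I(X_i ; R | X_{<i}, Y)`. Write `Z_i = (X_{<i}, Y_{≥i})`, so
that `(X_{<i}, Y)` carries the same information as `(Y_{<i}, Z_i)`. Expanding `I(X_i ; (R, Y_{<i}) | Z_i)`
in two ways gives
  `I(X_i ; R | Y_{<i}, Z_i) = I(X_i ; R | Z_i) + I(X_i ; Y_{<i} | R, Z_i) - I(X_i ; Y_{<i} | Z_i)`.
Independence of the pairs makes `X_i` and `Y_{<i}` conditionally independent given `Z_i`, so the
last term vanishes, and the middle one is nonnegative (Gibbs' inequality).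
-/

open Classical in
/-- Probability of an event `E` under a weight function `p` on a finite sample space. -/
noncomputable def pr {Ω : Type*} [Fintype Ω] (p : Ω → ℝ) (E : Ω → Prop) : ℝ :=
  ∑ ω, if E ω then p ω else 0

/-- Shannon entropy (in bits) of the random variable `f` under the distribution `p`. -/
noncomputable def ent {Ω α : Type*} [Fintype Ω] [Fintype α] (p : Ω → ℝ) (f : Ω → α) : ℝ :=
  -∑ z : α, pr p (fun ω => f ω = z) * Real.logb 2 (pr p (fun ω => f ω = z))

/-- Conditional entropy `H(f | g) = H(f, g) - H(g)`. -/
noncomputable def condEnt {Ω α β : Type*} [Fintype Ω] [Fintype α] [Fintype β]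
    (p : Ω → ℝ) (f : Ω → α) (g : Ω → β) : ℝ :=
  ent p (fun ω => (f ω, g ω)) - ent p g

/-- Conditional mutual information `I(f ; g | h) = H(f | h) - H(f | g, h)`. -/
noncomputable def condMI {Ω α β δ : Type*} [Fintype Ω] [Fintype α] [Fintype β] [Fintype δ]
    (p : Ω → ℝ) (f : Ω → α) (g : Ω → β) (h : Ω → δ) : ℝ :=
  condEnt p f h - condEnt p f (fun ω => (g ω, h ω))

section Probability

variable {Ω : Type*} [Fintype Ω] (p : Ω → ℝ)

lemma pr_congr {E E' : Ω → Prop} (h : ∀ ω, E ω ↔ E' ω) : pr p E = pr p E' :=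
  congrArg (pr p) (funext fun ω => propext (h ω))

lemma pr_nonneg (hp : ∀ ω, 0 ≤ p ω) (E : Ω → Prop) : 0 ≤ pr p E :=
  Finset.sum_nonneg fun ω _ => by split <;> simp [hp ω]

lemma le_pr (hp : ∀ ω, 0 ≤ p ω) {E : Ω → Prop} {ω : Ω} (hω : E ω) : p ω ≤ pr p E := by
  classical
  calc p ω = if E ω then p ω else 0 := (if_pos hω).symm
    _ ≤ pr p E := by
      unfold pr
      exact Finset.single_le_sum (f := fun ω => if E ω then p ω else 0)
        (fun ω _ => by split <;> simp [hp ω]) (Finset.mem_univ ω)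

lemma sum_mul_comp_eq_sum_pr_mul {γ : Type*} [Fintype γ] (v : Ω → γ) (F : γ → ℝ) :
    ∑ ω, p ω * F (v ω) = ∑ x, pr p (fun ω => v ω = x) * F x := by
  classical
  simp only [pr, Finset.sum_mul, ite_mul, zero_mul]
  rw [Finset.sum_comm]
  refine Finset.sum_congr rfl fun ω _ => ?_
  simp

lemma sum_pr_eq {α : Type*} [Fintype α] (f : Ω → α) :
    ∑ a, pr p (fun ω => f ω = a) = ∑ ω, p ω := by
  simpa using (sum_mul_comp_eq_sum_pr_mul p f fun _ => 1).symm

lemma pr_comp_eq_sum {γ : Type*} [Fintype γ] (v : Ω → γ) (Q : γ → Prop) [DecidablePred Q] :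
    pr p (fun ω => Q (v ω)) = ∑ x, if Q x then pr p (fun ω => v ω = x) else 0 := by
  have := sum_mul_comp_eq_sum_pr_mul p v fun x => if Q x then 1 else 0
  simp only [mul_ite, mul_one, mul_zero] at this
  rw [← this]
  unfold pr
  congr! 2

lemma sum_pr_pair_eq {α δ : Type*} [Fintype α] [Fintype δ] (f : Ω → α) (h : Ω → δ) (c : δ) :
    ∑ a, pr p (fun ω => (f ω, h ω) = (a, c)) = pr p (fun ω => h ω = c) := by
  classical
  rw [pr_comp_eq_sum p (fun ω => (f ω, h ω)) fun z => z.2 = c, Fintype.sum_prod_type]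
  simp only [Finset.sum_ite_eq', Finset.mem_univ, if_true]

/-- Writing entropies as `ω`-sums of log atom probabilities (`ent_eq_sum_atomPr`) makes random
variables that generate the same partition of `Ω` visibly have the same entropy. -/
noncomputable def atomPr {α : Type*} (f : Ω → α) (ω : Ω) : ℝ :=
  pr p (fun ω' => f ω' = f ω)

lemma atomPr_pos {α : Type*} (hp : ∀ ω, 0 ≤ p ω) {ω : Ω} (hω : 0 < p ω) (f : Ω → α) :
    0 < atomPr p f ω :=
  hω.trans_le (le_pr p hp rfl)

end Probability

section Entropy
variable {Ω α β δ : Type*} [Fintype Ω] [Fintype α] [Fintype β] [Fintype δ] (p : Ω → ℝ)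

lemma ent_eq_sum_atomPr (f : Ω → α) :
    ent p f = -∑ ω, p ω * Real.logb 2 (atomPr p f ω) := by
  rw [ent, ← sum_mul_comp_eq_sum_pr_mul p f fun z => Real.logb 2 (pr p fun ω => f ω = z)]
  rfl

lemma ent_congr {f : Ω → α} {g : Ω → β} (hfg : ∀ ω₁ ω₂, f ω₁ = f ω₂ ↔ g ω₁ = g ω₂) :
    ent p f = ent p g := by
  simp only [ent_eq_sum_atomPr, atomPr, pr_congr p fun ω' => hfg ω' _]

lemma condEnt_congr_right (f : Ω → α) {g : Ω → β} {g' : Ω → δ}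
    (hg : ∀ ω₁ ω₂, g ω₁ = g ω₂ ↔ g' ω₁ = g' ω₂) : condEnt p f g = condEnt p f g' := by
  rw [condEnt, condEnt, ent_congr p hg,
    ent_congr p (g := fun ω => (f ω, g' ω)) fun ω₁ ω₂ => by simp only [Prod.mk.injEq, hg]]

lemma condMI_congr_right {δ' : Type*} [Fintype δ'] (f : Ω → α) (g : Ω → β)
    {h : Ω → δ} {h' : Ω → δ'} (hh : ∀ ω₁ ω₂, h ω₁ = h ω₂ ↔ h' ω₁ = h' ω₂) :
    condMI p f g h = condMI p f g h' := by
  rw [condMI, condMI, condEnt_congr_right p f hh,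
    condEnt_congr_right p f (g := fun ω => (g ω, h ω)) (g' := fun ω => (g ω, h' ω))
      fun ω₁ ω₂ => by simp only [Prod.mk.injEq, hh]]

lemma condMI_eq_sum (f : Ω → α) (g : Ω → β) (h : Ω → δ) :
    condMI p f g h = ∑ ω, p ω *
      (Real.logb 2 (atomPr p (fun ω => (f ω, g ω, h ω)) ω) + Real.logb 2 (atomPr p h ω)
        - Real.logb 2 (atomPr p (fun ω => (f ω, h ω)) ω)
        - Real.logb 2 (atomPr p (fun ω => (g ω, h ω)) ω)) := by
  simp only [condMI, condEnt, ent_eq_sum_atomPr, mul_add, mul_sub, Finset.sum_add_distrib,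
    Finset.sum_sub_distrib]
  ring

lemma condMI_eq_zero_of_atomPr_mul_eq (hp : ∀ ω, 0 ≤ p ω) (f : Ω → α) (g : Ω → β) (h : Ω → δ)
    (hfac : ∀ ω, atomPr p (fun ω => (f ω, g ω, h ω)) ω * atomPr p h ω
      = atomPr p (fun ω => (f ω, h ω)) ω * atomPr p (fun ω => (g ω, h ω)) ω) :
    condMI p f g h = 0 := by
  rw [condMI_eq_sum]
  refine Finset.sum_eq_zero fun ω _ => ?_
  rcases (hp ω).eq_or_lt with hω | hω
  · rw [← hω, zero_mul]
  rw [sub_sub, ← Real.logb_mul (atomPr_pos p hp hω _).ne' (atomPr_pos p hp hω _).ne',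
    ← Real.logb_mul (atomPr_pos p hp hω _).ne' (atomPr_pos p hp hω _).ne', hfac, sub_self,
    mul_zero]

lemma sum_mul_atomPr_ratio_le (hp : ∀ ω, 0 ≤ p ω) (f : Ω → α) (g : Ω → β) (h : Ω → δ) :
    ∑ ω, p ω * (atomPr p (fun ω => (f ω, h ω)) ω * atomPr p (fun ω => (g ω, h ω)) ω
      / (atomPr p (fun ω => (f ω, g ω, h ω)) ω * atomPr p h ω)) ≤ ∑ ω, p ω := by
  set P : α × β × δ → ℝ := fun x => pr p (fun ω => (f ω, g ω, h ω) = x)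
  set A : α → δ → ℝ := fun a c => pr p (fun ω => (f ω, h ω) = (a, c))
  set B : β → δ → ℝ := fun b c => pr p (fun ω => (g ω, h ω) = (b, c))
  set C : δ → ℝ := fun c => pr p (fun ω => h ω = c)
  calc _ = ∑ x, P x * (A x.1 x.2.2 * B x.2.1 x.2.2 / (P x * C x.2.2)) :=
        sum_mul_comp_eq_sum_pr_mul p (fun ω => (f ω, g ω, h ω)) _
    _ ≤ ∑ x : α × β × δ, A x.1 x.2.2 * B x.2.1 x.2.2 / C x.2.2 := by
        refine Finset.sum_le_sum fun x _ => ?_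
        rcases eq_or_ne (P x) 0 with hx | hx
        · rw [hx, zero_mul]
          exact div_nonneg (mul_nonneg (pr_nonneg p hp _) (pr_nonneg p hp _)) (pr_nonneg p hp _)
        · rw [← mul_div_assoc, mul_div_mul_left _ _ hx]
    _ = ∑ c, (∑ a, A a c) * (∑ b, B b c) / C c := by
        simp only [Fintype.sum_prod_type, Finset.sum_mul_sum, Finset.sum_div]
        exact (Finset.sum_congr rfl fun _ _ => Finset.sum_comm).trans Finset.sum_comm
    _ = ∑ c, C c * C c / C c := by simp only [A, B, C, sum_pr_pair_eq]
    _ = ∑ ω, p ω := by simp only [mul_self_div_self, C, sum_pr_eq]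

lemma condMI_nonneg (hp : ∀ ω, 0 ≤ p ω) (f : Ω → α) (g : Ω → β) (h : Ω → δ) :
    0 ≤ condMI p f g h := by
  set a := atomPr p (fun ω => (f ω, g ω, h ω))
  set b := atomPr p h
  set c := atomPr p (fun ω => (f ω, h ω))
  set d := atomPr p (fun ω => (g ω, h ω))
  have hlog2 : 0 < Real.log 2 := Real.log_pos one_lt_two
  -- Gibbs: `1 - r ≤ -log r` for the ratio `r = c d / (a b)`
  have hterm (ω : Ω) : p ω * (1 - c ω * d ω / (a ω * b ω)) / Real.log 2
      ≤ p ω * (Real.logb 2 (a ω) + Real.logb 2 (b ω) - Real.logb 2 (c ω) - Real.logb 2 (d ω)) := by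
    rcases (hp ω).eq_or_lt with hω | hω
    · simp [← hω]
    have ha : 0 < a ω := atomPr_pos p hp hω _
    have hb : 0 < b ω := atomPr_pos p hp hω _
    have hc : 0 < c ω := atomPr_pos p hp hω _
    have hd : 0 < d ω := atomPr_pos p hp hω _
    have hlog := Real.log_le_sub_one_of_pos (show 0 < c ω * d ω / (a ω * b ω) by positivity)
    rw [Real.log_div (by positivity) (by positivity), Real.log_mul hc.ne' hd.ne',
      Real.log_mul ha.ne' hb.ne'] at hlog
    calc p ω * (1 - c ω * d ω / (a ω * b ω)) / Real.log 2
        ≤ p ω * (Real.log (a ω) + Real.log (b ω) - Real.log (c ω) - Real.log (d ω))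
          / Real.log 2 :=
          div_le_div_of_nonneg_right (mul_le_mul_of_nonneg_left (by linarith) hω.le) hlog2.le
      _ = _ := by simp only [Real.logb]; ring
  rw [condMI_eq_sum]
  calc (0 : ℝ) ≤ (∑ ω, p ω - ∑ ω, p ω * (c ω * d ω / (a ω * b ω))) / Real.log 2 :=
        div_nonneg (sub_nonneg.2 (sum_mul_atomPr_ratio_le p hp f g h)) hlog2.le
    _ = ∑ ω, p ω * (1 - c ω * d ω / (a ω * b ω)) / Real.log 2 := by
        simp only [← Finset.sum_sub_distrib, Finset.sum_div, mul_sub, mul_one]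
    _ ≤ _ := Finset.sum_le_sum fun ω _ => hterm ω

lemma condMI_le_condMI_of_condMI_eq_zero {ρ : Type*} [Fintype ρ] (hp : ∀ ω, 0 ≤ p ω)
    {f : Ω → α} {g : Ω → β} {h : Ω → δ} (h0 : condMI p f g h = 0) (r : Ω → ρ) :
    condMI p f r h ≤ condMI p f r (fun ω => (g ω, h ω)) := by
  have hswap : condEnt p f (fun ω => (r ω, g ω, h ω)) = condEnt p f (fun ω => (g ω, r ω, h ω)) :=
    condEnt_congr_right p f fun ω₁ ω₂ => by simp only [Prod.mk.injEq]; tauto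
  have hnonneg := condMI_nonneg p hp f g fun ω => (r ω, h ω)
  simp only [condMI] at h0 hnonneg ⊢
  linarith

end Entropy

section ChainRule
variable {Ω α β γ : Type*} {n : ℕ}

/-- `X_{<m}`, as a tuple with the coordinates `j ≥ m` masked by `none`; `suffixObs Y m` is `Y_{≥m}`. -/
def prefixObs (X : Fin n → Ω → α) (m : ℕ) (ω : Ω) : Fin n → Option α :=
  fun j => if (j : ℕ) < m then some (X j ω) else none

def suffixObs (Y : Fin n → Ω → β) (m : ℕ) (ω : Ω) : Fin n → Option β :=
  fun j => if m ≤ (j : ℕ) then some (Y j ω) else none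

lemma prefixObs_eq_iff {X : Fin n → Ω → α} {m : ℕ} {ω₁ ω₂ : Ω} :
    prefixObs X m ω₁ = prefixObs X m ω₂ ↔ ∀ j : Fin n, (j : ℕ) < m → X j ω₁ = X j ω₂ := by
  refine funext_iff.trans (forall_congr' fun j => ?_)
  by_cases hj : (j : ℕ) < m <;> simp [prefixObs, hj]

lemma suffixObs_eq_iff {Y : Fin n → Ω → β} {m : ℕ} {ω₁ ω₂ : Ω} :
    suffixObs Y m ω₁ = suffixObs Y m ω₂ ↔ ∀ j : Fin n, m ≤ (j : ℕ) → Y j ω₁ = Y j ω₂ := by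
  refine funext_iff.trans (forall_congr' fun j => ?_)
  by_cases hj : m ≤ (j : ℕ) <;> simp [suffixObs, hj]

variable [Fintype Ω] [Fintype α] [Fintype γ] (p : Ω → ℝ)

lemma ent_prefixObs_succ (X : Fin n → Ω → α) (W : Ω → γ) (i : Fin n) :
    ent p (fun ω => (prefixObs X (i + 1) ω, W ω))
      = ent p (fun ω => (X i ω, prefixObs X i ω, W ω)) := by
  refine ent_congr p fun ω₁ ω₂ => ?_
  simp only [Prod.mk.injEq, prefixObs_eq_iff]
  constructor
  · rintro ⟨hX, hW⟩
    exact ⟨hX i (by omega), fun j hj => hX j (by omega), hW⟩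
  · rintro ⟨hXi, hX, hW⟩
    refine ⟨fun j hj => ?_, hW⟩
    rcases (Nat.lt_succ_iff_lt_or_eq.1 hj) with hj | hj
    · exact hX j hj
    · exact Fin.ext hj ▸ hXi

lemma condEnt_pi_eq_sum (X : Fin n → Ω → α) (W : Ω → γ) :
    condEnt p (fun ω i => X i ω) W
      = ∑ i : Fin n, condEnt p (X i) (fun ω => (prefixObs X i ω, W ω)) := by
  set φ : ℕ → ℝ := fun m => ent p (fun ω => (prefixObs X m ω, W ω))
  have hfull : ent p (fun ω => ((fun i => X i ω), W ω)) = φ n :=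
    ent_congr p fun ω₁ ω₂ => by
      rw [Prod.mk.injEq, Prod.mk.injEq, prefixObs_eq_iff, funext_iff]
      simp only [Fin.is_lt, true_implies]
  have hzero : ent p W = φ 0 :=
    ent_congr p fun ω₁ ω₂ => by simp [prefixObs_eq_iff]
  have hstep (i : Fin n) : condEnt p (X i) (fun ω => (prefixObs X i ω, W ω))
      = φ (i + 1) - φ i := by
    simp only [φ, condEnt, ent_prefixObs_succ]
  rw [condEnt, hfull, hzero, ← Finset.sum_range_sub, ← Fin.sum_univ_eq_sum_range
    (fun k => φ (k + 1) - φ k)]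
  exact (Finset.sum_congr rfl fun i _ => hstep i).symm

lemma condMI_pi_eq_sum {ρ : Type*} [Fintype ρ] (X : Fin n → Ω → α) (R : Ω → ρ) (W : Ω → γ) :
    condMI p (fun ω i => X i ω) R W
      = ∑ i : Fin n, condMI p (X i) R (fun ω => (prefixObs X i ω, W ω)) := by
  have hswap (i : Fin n) : condEnt p (X i) (fun ω => (R ω, prefixObs X i ω, W ω))
      = condEnt p (X i) (fun ω => (prefixObs X i ω, R ω, W ω)) :=
    condEnt_congr_right p (X i) fun ω₁ ω₂ => by simp only [Prod.mk.injEq]; tauto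
  simp only [condMI, condEnt_pi_eq_sum, hswap, Finset.sum_sub_distrib]

end ChainRule

section Independence
variable {Ω α β : Type*} [Fintype Ω] {n : ℕ} (p : Ω → ℝ)

def IndepPairs (X : Fin n → Ω → α) (Y : Fin n → Ω → β) : Prop :=
  ∀ (a : Fin n → α) (b : Fin n → β),
    pr p (fun ω => ∀ i, X i ω = a i ∧ Y i ω = b i) = ∏ i, pr p (fun ω => X i ω = a i ∧ Y i ω = b i)

variable [Fintype α] [Fintype β] {X : Fin n → Ω → α} {Y : Fin n → Ω → β}

lemma pr_forall_and_eq_prod (hindep : IndepPairs p X Y)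
    (φ : Fin n → α → Prop) (ψ : Fin n → β → Prop) :
    pr p (fun ω => ∀ j, φ j (X j ω) ∧ ψ j (Y j ω))
      = ∏ j, pr p (fun ω => φ j (X j ω) ∧ ψ j (Y j ω)) := by
  classical
  have hjoint (t : Fin n → α × β) : pr p (fun ω => (fun j => (X j ω, Y j ω)) = t)
      = ∏ j, pr p (fun ω => (X j ω, Y j ω) = t j) := by
    simp only [funext_iff, Prod.ext_iff]
    exact hindep _ _
  have hfactor (j : Fin n) : pr p (fun ω => φ j (X j ω) ∧ ψ j (Y j ω))
      = ∑ u, if φ j u.1 ∧ ψ j u.2 then pr p (fun ω => (X j ω, Y j ω) = u) else 0 :=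
    pr_comp_eq_sum p (fun ω => (X j ω, Y j ω)) fun u => φ j u.1 ∧ ψ j u.2
  rw [pr_comp_eq_sum p (fun ω j => (X j ω, Y j ω)) fun t => ∀ j, φ j (t j).1 ∧ ψ j (t j).2]
  simp only [hfactor, Fintype.prod_sum, Finset.prod_ite_zero, hjoint, Finset.mem_univ, true_implies]

lemma atomPr_eq_prod_of_forall_iff (hindep : IndepPairs p X Y)
    {γ : Type*} {v : Ω → γ} {ω₀ : Ω} (s t : Fin n → Prop)
    (hv : ∀ ω, v ω = v ω₀ ↔ ∀ j, (s j → X j ω = X j ω₀) ∧ (t j → Y j ω = Y j ω₀)) :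
    atomPr p v ω₀ = ∏ j, pr p (fun ω => (s j → X j ω = X j ω₀) ∧ (t j → Y j ω = Y j ω₀)) :=
  (pr_congr p hv).trans
    (pr_forall_and_eq_prod p hindep (fun j x => s j → x = X j ω₀) fun j y => t j → y = Y j ω₀)

lemma condMI_prefixObs_eq_zero (hp : ∀ ω, 0 ≤ p ω) (hindep : IndepPairs p X Y) (i : Fin n) :
    condMI p (X i) (prefixObs Y i) (fun ω => (prefixObs X i ω, suffixObs Y i ω)) = 0 := by
  refine condMI_eq_zero_of_atomPr_mul_eq p hp _ _ _ fun ω₀ => ?_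
  -- All four atoms are rectangles. For `j < i` the two sides have the same two factors in swapped
  -- order, for `j ≥ i` the same factors in the same order.
  rw [atomPr_eq_prod_of_forall_iff p hindep (fun j => (j : ℕ) ≤ i) (fun _ => True),
    atomPr_eq_prod_of_forall_iff p hindep (fun j => (j : ℕ) < i) (fun j => (i : ℕ) ≤ j),
    atomPr_eq_prod_of_forall_iff p hindep (fun j => (j : ℕ) ≤ i) (fun j => (i : ℕ) ≤ j),
    atomPr_eq_prod_of_forall_iff p hindep (fun j => (j : ℕ) < i) (fun _ => True),
    ← Finset.prod_mul_distrib, ← Finset.prod_mul_distrib]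
  · refine Finset.prod_congr rfl fun j _ => ?_
    rcases lt_or_ge (j : ℕ) i with hj | hj
    · simp only [hj, hj.le, not_le.2 hj]
      exact mul_comm _ _
    · simp only [hj, not_lt.2 hj]
  all_goals
    intro ω
    simp only [Prod.mk.injEq, prefixObs_eq_iff, suffixObs_eq_iff]
    grind

end Independence

theorem stmt9_general {Ω α β ρ : Type*} [Fintype Ω] [Fintype α] [Fintype β] [Fintype ρ]
    (n : ℕ) (p : Ω → ℝ) (X : Fin n → Ω → α) (Y : Fin n → Ω → β) (R : Ω → ρ)
    (hp : ∀ ω, 0 ≤ p ω)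
    (hindep : ∀ (a : Fin n → α) (b : Fin n → β),
      pr p (fun ω => ∀ i, X i ω = a i ∧ Y i ω = b i)
        = ∏ i, pr p (fun ω => X i ω = a i ∧ Y i ω = b i)) :
    ∑ i : Fin n, condMI p (X i) R (fun ω =>
        ( (fun j : Fin n => if (j:ℕ) < (i:ℕ) then some (X j ω) else none),
          (fun j : Fin n => if (i:ℕ) ≤ (j:ℕ) then some (Y j ω) else none) ))
      ≤ condMI p (fun ω => (fun i => X i ω)) R (fun ω => (fun i => Y i ω)) := by
  rw [condMI_pi_eq_sum]
  refine Finset.sum_le_sum fun i _ => ?_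
  calc condMI p (X i) R (fun ω => (prefixObs X i ω, suffixObs Y i ω))
      ≤ condMI p (X i) R (fun ω => (prefixObs Y i ω, prefixObs X i ω, suffixObs Y i ω)) :=
        condMI_le_condMI_of_condMI_eq_zero p hp (condMI_prefixObs_eq_zero p hp hindep i) R
    _ = condMI p (X i) R (fun ω => (prefixObs X i ω, fun j => Y j ω)) :=
        condMI_congr_right p _ _ fun ω₁ ω₂ => by
          rw [Prod.mk.injEq, Prod.mk.injEq, Prod.mk.injEq, prefixObs_eq_iff, prefixObs_eq_iff,
            suffixObs_eq_iff, funext_iff]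
          grind

/-- Direct-sum lemma: if the pairs `(X_i, Y_i)` are mutually independent, then
`∑ i, I(X_i ; R | X_{<i}, Y_{≥i}) ≤ I(X ; R | Y)`.  Here the prefix `X_{<i}` and the
suffix `Y_{≥i}` are encoded as `Option`-valued tuples. -/
theorem stmt9 {Ω α β ρ : Type*} [Fintype Ω] [Fintype α] [Fintype β] [Fintype ρ]
    [DecidableEq α] [DecidableEq β]
    (n : ℕ) (p : Ω → ℝ) (X : Fin n → Ω → α) (Y : Fin n → Ω → β) (R : Ω → ρ)
    (hp : ∀ ω, 0 ≤ p ω) (hsum : ∑ ω, p ω = 1)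
    (hindep : ∀ (a : Fin n → α) (b : Fin n → β),
      pr p (fun ω => ∀ i, X i ω = a i ∧ Y i ω = b i)
        = ∏ i, pr p (fun ω => X i ω = a i ∧ Y i ω = b i)) :
    ∑ i : Fin n, condMI p (X i) R (fun ω =>
        ( (fun j : Fin n => if (j:ℕ) < (i:ℕ) then some (X j ω) else none),
          (fun j : Fin n => if (i:ℕ) ≤ (j:ℕ) then some (Y j ω) else none) ))
      ≤ condMI p (fun ω => (fun i => X i ω)) R (fun ω => (fun i => Y i ω)) :=
  stmt9_general n p X Y R hp hindep
end

section
/- Let P = conv{v₁,...,v_s} ⊆ ℝ^d and Q = {x : ⟨a_i, x⟩ ≤ b_i for all i ∈ [t]} ⊆ ℝ^d with P ⊆ Q, and let S be the (nonnegative) slack matrix with S_{ij} = b_i - ⟨a_i, v_j⟩. Then for any polytope K with P ⊆ K ⊆ Q, the extension complexity of K satisfies xc(K) ≥ rk₊(S) - 1. -/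
/-!
Each inequality `⟨a i, x⟩ ≤ b i` of `Q` holds on `K = π Q'`, so its pullback along `π` is valid on
the nonempty polyhedron `Q' = {y | A' y ≤ b'}`. By the affine Farkas lemma it is a nonnegative
combination `μ i` of the rows of `A'` plus a nonnegative slack `b i - ⟨μ i, b'⟩`. Lifting every
`v j` to some `y j ∈ Q'` then factors the slack matrix through `ℝ^(f+1)`:
`b i - ⟨a i, v j⟩ = ⟨μ i, b' - A' y j⟩ + (b i - ⟨μ i, b'⟩) * 1`.

Farkas' lemma comes from separating `(c, δ)` from the cone generated by the rows `(A i, b i)` and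
`(0, 1)`; this cone is closed because, by Carathéodory's argument, it is a finite union of cones
over linearly independent generators, i.e. of linear images of orthants.
-/

open Set Matrix PointedCone

section ConicCombination

variable {R E ι : Type*} [Semiring R] [PartialOrder R] [IsOrderedRing R] [AddCommMonoid E]
  [Module R E] [Fintype ι]

lemma PointedCone.mem_hull_range_iff {g : ι → E} {x : E} :
    x ∈ hull R (range g) ↔ ∃ c : ι → R, 0 ≤ c ∧ ∑ i, c i • g i = x := by
  rw [Submodule.mem_span_range_iff_exists_fun]
  constructor
  · rintro ⟨c, rfl⟩
    exact ⟨fun i => c i, fun i => (c i).2, rfl⟩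
  · rintro ⟨c, hc, rfl⟩
    exact ⟨fun i => ⟨c i, hc i⟩, rfl⟩

end ConicCombination

section Caratheodory

variable {𝕜 E ι : Type*} [Field 𝕜] [LinearOrder 𝕜] [IsStrictOrderedRing 𝕜] [AddCommGroup E]
  [Module 𝕜 E] [Fintype ι]

lemma exists_nonneg_coeff_eq_zero_of_not_linearIndependent {g : ι → E}
    (hg : ¬LinearIndependent 𝕜 g) {l : ι → 𝕜} (hl : 0 ≤ l) :
    ∃ l' : ι → 𝕜, 0 ≤ l' ∧ (∃ i, l' i = 0) ∧ ∑ i, l' i • g i = ∑ i, l i • g i := by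
  obtain ⟨c, hc, hpos⟩ : ∃ c : ι → 𝕜, ∑ i, c i • g i = 0 ∧ ∃ i, 0 < c i := by
    obtain ⟨c, hc, i, hci⟩ := Fintype.not_linearIndependent_iff.1 hg
    rcases hci.lt_or_gt with hneg | hpos
    · exact ⟨-c, by simp [neg_smul, hc], i, by simpa using hneg⟩
    · exact ⟨c, hc, i, hpos⟩
  obtain ⟨i₀, hi₀, hmin⟩ := Finset.exists_min_image {i | 0 < c i} (fun i => l i / c i)
    (by simpa [Finset.filter_nonempty_iff] using hpos)
  simp only [Finset.mem_filter, Finset.mem_univ, true_and] at hi₀ hmin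
  -- Move along the relation `c` until the first coefficient of `l` reaches zero.
  set τ := l i₀ / c i₀
  refine ⟨l - τ • c, fun i => ?_, ⟨i₀, ?_⟩, ?_⟩
  · rcases le_or_gt (c i) 0 with hci | hci
    · have : 0 ≤ τ := div_nonneg (hl i₀) hi₀.le
      simp only [Pi.zero_apply, Pi.sub_apply, Pi.smul_apply, smul_eq_mul, sub_nonneg]
      linarith [mul_nonpos_of_nonneg_of_nonpos this hci, show 0 ≤ l i from hl i]
    · simpa [sub_nonneg, ← le_div_iff₀ hci] using hmin i hci
  · simp [τ, div_mul_cancel₀ _ hi₀.ne']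
  · simp [sub_smul, Finset.sum_sub_distrib, mul_smul, ← Finset.smul_sum, hc]

lemma PointedCone.coe_hull_range_eq_iUnion_succAbove {m : ℕ} {g : Fin (m + 1) → E}
    (hg : ¬LinearIndependent 𝕜 g) :
    (hull 𝕜 (range g) : Set E) = ⋃ i₀ : Fin (m + 1), hull 𝕜 (range (g ∘ i₀.succAbove)) := by
  refine Subset.antisymm (fun x hx => ?_) (iUnion_subset fun i₀ =>
    SetLike.coe_subset_coe.2 (Submodule.span_mono (range_comp_subset_range _ _)))
  obtain ⟨l, hl, rfl⟩ := mem_hull_range_iff.1 hx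
  obtain ⟨l', hl', ⟨i₀, hi₀⟩, hsum⟩ := exists_nonneg_coeff_eq_zero_of_not_linearIndependent hg hl
  refine mem_iUnion.2 ⟨i₀, mem_hull_range_iff.2 ⟨l' ∘ i₀.succAbove, fun i => hl' _, ?_⟩⟩
  rw [← hsum, Fin.sum_univ_succAbove _ i₀, hi₀, zero_smul, zero_add]
  rfl

end Caratheodory

section Closed

variable {E ι : Type*} [AddCommGroup E] [Module ℝ E] [TopologicalSpace E] [IsTopologicalAddGroup E]
  [ContinuousSMul ℝ E] [T2Space E]

lemma LinearIndependent.isClosed_hull_range [Fintype ι] {g : ι → E}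
    (hg : LinearIndependent ℝ g) : IsClosed (hull ℝ (range g) : Set E) := by
  have himage : (hull ℝ (range g) : Set E) = Fintype.linearCombination ℝ g '' {c | 0 ≤ c} := by
    ext x
    simp [mem_hull_range_iff, Fintype.linearCombination_apply]
  rw [himage]
  exact (LinearMap.isClosedEmbedding_of_injective (LinearMap.ker_eq_bot.2
    hg.fintypeLinearCombination_injective)).isClosedMap _ (isClosed_le continuous_const continuous_id)

lemma PointedCone.isClosed_hull_range_fin {m : ℕ} (g : Fin m → E) :
    IsClosed (hull ℝ (range g) : Set E) := by
  induction m with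
  | zero => exact linearIndependent_empty_type.isClosed_hull_range
  | succ m ih =>
    by_cases hg : LinearIndependent ℝ g
    · exact hg.isClosed_hull_range
    · rw [coe_hull_range_eq_iUnion_succAbove hg]
      exact isClosed_iUnion_of_finite fun i₀ => ih _

lemma PointedCone.isClosed_hull_of_finite {s : Set E} (hs : s.Finite) :
    IsClosed (hull ℝ s : Set E) := by
  obtain ⟨m, g, -, rfl⟩ := hs.fin_param
  exact isClosed_hull_range_fin g

end Closed

section Farkas

variable {m n : Type*} [Fintype n] {A : Matrix m n ℝ} {b : m → ℝ} {c : n → ℝ} {δ : ℝ}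

lemma LinearMap.exists_apply_prod_eq_dotProduct_add_mul (φ : ((n → ℝ) × ℝ) →ₗ[ℝ] ℝ) :
    ∃ (w : n → ℝ) (r : ℝ), ∀ z t, φ (z, t) = w ⬝ᵥ z + r * t := by
  classical
  refine ⟨fun k => φ (fun j => if k = j then 1 else 0, 0), φ (0, 1), fun z t => ?_⟩
  have hsplit : ((z, t) : (n → ℝ) × ℝ) = LinearMap.inl ℝ _ ℝ z + t • (0, 1) := by simp
  rw [hsplit, map_add, map_smul, ← LinearMap.comp_apply, LinearMap.pi_apply_eq_sum_univ]
  simp [dotProduct, mul_comm]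

lemma dotProduct_le_mul_of_mulVec_le_smul (hne : ∃ y₀, A *ᵥ y₀ ≤ b)
    (h : ∀ y, A *ᵥ y ≤ b → c ⬝ᵥ y ≤ δ) {y : n → ℝ} {r : ℝ} (hr : 0 ≤ r)
    (hy : A *ᵥ y ≤ r • b) : c ⬝ᵥ y ≤ r * δ := by
  rcases hr.lt_or_eq with hr | rfl
  · have := h (r⁻¹ • y) (by rwa [mulVec_smul, inv_smul_le_iff_of_pos hr])
    rwa [dotProduct_smul, smul_eq_mul, inv_mul_le_iff₀ hr] at this
  · obtain ⟨y₀, hy₀⟩ := hne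
    -- `y` is a recession direction of the polyhedron, along which `c` must not increase.
    have hray : ∀ s : ℝ, 0 ≤ s → c ⬝ᵥ y₀ + s * c ⬝ᵥ y ≤ δ := fun s hs => by
      have hfeas : A *ᵥ (y₀ + s • y) ≤ b := by
        rw [zero_smul] at hy
        rw [mulVec_add, mulVec_smul]
        simpa using add_le_add hy₀ (smul_nonpos_of_nonneg_of_nonpos hs hy)
      simpa [dotProduct_add, dotProduct_smul] using h _ hfeas
    rw [zero_mul]
    by_contra! hpos
    have := hray ((δ - c ⬝ᵥ y₀ + 1) / c ⬝ᵥ y) (div_nonneg (by linarith [hray 0 le_rfl]) hpos.le)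
    rw [div_mul_cancel₀ _ hpos.ne'] at this
    linarith

theorem exists_nonneg_vecMul_eq_of_forall_mulVec_le [Fintype m] (hne : ∃ y₀, A *ᵥ y₀ ≤ b)
    (h : ∀ y, A *ᵥ y ≤ b → c ⬝ᵥ y ≤ δ) : ∃ μ : m → ℝ, 0 ≤ μ ∧ μ ᵥ* A = c ∧ μ ⬝ᵥ b ≤ δ := by
  set S : Set ((n → ℝ) × ℝ) := insert (0, 1) (range fun i => (A i, b i))
  have hmem : (c, δ) ∈ hull ℝ S := by
    by_contra hnot
    obtain ⟨φ, hφS, hφ⟩ := ProperCone.hyperplane_separation_point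
      ⟨hull ℝ S, isClosed_hull_of_finite ((finite_range _).insert _)⟩ hnot
    obtain ⟨w, r, hφwr⟩ : ∃ (w : n → ℝ) (r : ℝ), ∀ z t, φ (z, t) = w ⬝ᵥ z + r * t :=
      φ.toLinearMap.exists_apply_prod_eq_dotProduct_add_mul
    have hr : 0 ≤ r := by simpa [hφwr] using hφS _ (subset_hull (mem_insert _ _))
    have hAw : A *ᵥ (-w) ≤ r • b := fun i => by
      have := hφS _ (subset_hull (mem_insert_of_mem _ ⟨i, rfl⟩))
      simp only [hφwr] at this
      rw [mulVec_neg, Pi.neg_apply, Pi.smul_apply, smul_eq_mul, mulVec, dotProduct_comm]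
      linarith
    have := dotProduct_le_mul_of_mulVec_le_smul hne h hr hAw
    rw [hφwr, dotProduct_comm] at hφ
    rw [dotProduct_neg] at this
    linarith
  obtain ⟨t, z, hz, hcz⟩ := Submodule.mem_span_insert.1 hmem
  obtain ⟨μ, hμ, rfl⟩ := mem_hull_range_iff.1 hz
  refine ⟨μ, hμ, ?_, ?_⟩
  · simpa [vecMul_eq_sum, Prod.fst_sum] using (congrArg Prod.fst hcz).symm
  · have := congrArg Prod.snd hcz
    simp only [Prod.snd_add, Prod.smul_snd, Prod.snd_sum, smul_eq_mul] at this
    rw [this, dotProduct, le_add_iff_nonneg_left]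
    exact smul_nonneg t.2 zero_le_one

end Farkas

theorem stmt16_general (d s t : ℕ) (v : Fin s → (Fin d → ℝ))
    (a : Fin t → (Fin d → ℝ)) (b : Fin t → ℝ)
    (K : Set (Fin d → ℝ))
    (hPK : convexHull ℝ (Set.range v) ⊆ K)
    (hKQ : K ⊆ {x | ∀ i : Fin t, ∑ k, a i k * x k ≤ b i})
    (d' f : ℕ) (A' : Fin f → (Fin d' → ℝ)) (b' : Fin f → ℝ)
    (π : (Fin d' → ℝ) →ₗ[ℝ] (Fin d → ℝ))
    (hEF : π '' {y | ∀ i : Fin f, ∑ k, A' i k * y k ≤ b' i} = K) :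
    ∃ (F : Fin t → Fin (f + 1) → ℝ) (G : Fin (f + 1) → Fin s → ℝ),
      (∀ i l, 0 ≤ F i l) ∧ (∀ l j, 0 ≤ G l j) ∧
      (∀ i j, b i - ∑ k, a i k * v j k = ∑ l, F i l * G l j) := by
  rcases isEmpty_or_nonempty (Fin s) with _ | ⟨⟨j₀⟩⟩
  · exact ⟨0, 0, fun _ _ => le_rfl, fun _ _ => le_rfl, fun _ j => isEmptyElim j⟩
  have hlift : ∀ j, ∃ y, A' *ᵥ y ≤ b' ∧ π y = v j := fun j => by
    rw [← hEF] at hPK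
    exact hPK (subset_convexHull ℝ _ ⟨j, rfl⟩)
  choose y hyQ' hyv using hlift
  have hdual : ∀ i, ∃ μ : Fin f → ℝ,
      0 ≤ μ ∧ μ ᵥ* A' = a i ᵥ* LinearMap.toMatrix' π ∧ μ ⬝ᵥ b' ≤ b i := fun i =>
    exists_nonneg_vecMul_eq_of_forall_mulVec_le ⟨y j₀, hyQ' j₀⟩ fun z hz => by
      rw [← dotProduct_mulVec, LinearMap.toMatrix'_mulVec]
      exact hKQ (hEF ▸ mem_image_of_mem π hz) i
  choose μ hμ hμA hμb using hdual
  refine ⟨fun i => Fin.snoc (μ i) (b i - μ i ⬝ᵥ b'),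
    fun l j => (Fin.snoc (b' - A' *ᵥ y j) 1 : Fin (f + 1) → ℝ) l,
    fun i l => ?_, fun l j => ?_, fun i j => ?_⟩
  · refine Fin.lastCases ?_ (fun l => ?_) l
    · simpa using hμb i
    · simpa using hμ i l
  · refine Fin.lastCases ?_ (fun l => ?_) l
    · simp
    · simpa using hyQ' j l
  · change b i - a i ⬝ᵥ v j = _
    rw [Fin.sum_univ_castSucc, ← hyv j, ← LinearMap.toMatrix'_mulVec, dotProduct_mulVec, ← hμA i,
      ← dotProduct_mulVec (μ i) (A' : Matrix (Fin f) (Fin d') ℝ)]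
    simp only [Fin.snoc_castSucc, Fin.snoc_last, mul_one]
    rw [← dotProduct, dotProduct_sub]
    ring

/-- Yannakakis/BFPS-style lower bound: if `P = conv{v_j} ⊆ K ⊆ Q = {x : ⟨a_i,x⟩ ≤ b_i}`
and `K` has an extended formulation with `f` inequalities (a polyhedron in `ℝ^{d'}`
projecting linearly onto `K`), then the slack matrix `S_{ij} = b_i - ⟨a_i, v_j⟩`
admits a nonnegative factorization of inner dimension `f + 1`; i.e.
`xc(K) ≥ rk₊(S) - 1`. -/
theorem stmt16 (d s t : ℕ) (v : Fin s → (Fin d → ℝ))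
    (a : Fin t → (Fin d → ℝ)) (b : Fin t → ℝ)
    (hPQ : ∀ (j : Fin s) (i : Fin t), ∑ k, a i k * v j k ≤ b i)
    (K : Set (Fin d → ℝ))
    (hPK : convexHull ℝ (Set.range v) ⊆ K)
    (hKQ : K ⊆ {x | ∀ i : Fin t, ∑ k, a i k * x k ≤ b i})
    (d' f : ℕ) (A' : Fin f → (Fin d' → ℝ)) (b' : Fin f → ℝ)
    (π : (Fin d' → ℝ) →ₗ[ℝ] (Fin d → ℝ))
    (hEF : π '' {y | ∀ i : Fin f, ∑ k, A' i k * y k ≤ b' i} = K) :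
    ∃ (F : Fin t → Fin (f + 1) → ℝ) (G : Fin (f + 1) → Fin s → ℝ),
      (∀ i l, 0 ≤ F i l) ∧ (∀ l j, 0 ≤ G l j) ∧
      (∀ i j, b i - ∑ k, a i k * v j k = ∑ l, F i l * G l j) :=
  stmt16_general d s t v a b K hPK hKQ d' f A' b' π hEF
end
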